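/- Let F : ℝ^n × (0,∞) → ℝ be locally integrable and f ∈ L^p(ℝ^n) with p > 1, n ≥ 1. Suppose |F(x,t)| ≤ C · (average of |f| over the ball B^n(x,t)) for all (x,t). Then ‖F‖_{L^q(ℝ^{n+1}_+)} ≤ C' ‖f‖_{L^p(ℝ^n)} with q = (n+1)p/n, where C' depends only on n, p, C. -/

import Mathlib

/-!
Let `A(x,t)` be the average of `|f|` over `B(x,t)`, so that `|F| ≤ C A`. At a level `s > 0`
write `|f| ≤ f_s + s` with `f_s = |f| 1_{|f| > s}`; then `A(x,t) > 2s` forces the average of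
`f_s` over `B(x,t)` to exceed `s`. For fixed `t` this happens on a set of measure at most
`‖f_s‖₁ / s` (averaging over balls of radius `t` preserves the integral), and only when
`|B(0,t)| s < ‖f_s‖₁ ≤ s^(1-p) ‖f‖_p^p`, that is for `t ≲ (s^(-p) ‖f‖_p^p)^(1/n)`. Hence
`|{A > 2s}| ≲ ‖f‖_p^(p/n) s^(-p/n-1) ‖f_s‖₁`, and the layer-cake formula with `q = p + p/n`
gives `∫ A^q ≲ ‖f‖_p^(p/n) ∫₀^∞ s^(p-2) ‖f_s‖₁ ds = ‖f‖_p^(p/n) ‖f‖_p^p / (p-1)`.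
-/

open MeasureTheory Metric Set Filter
open scoped ENNReal

section

variable {α : Type*} [MeasurableSpace α] {μ : Measure α}

theorem enorm_average_le_laverage {E : Type*} [NormedAddCommGroup E] [NormedSpace ℝ E]
    (f : α → E) : ‖⨍ x, f x ∂μ‖ₑ ≤ ⨍⁻ x, ‖f x‖ₑ ∂μ := by
  rw [average_eq', laverage_eq']
  exact enorm_integral_le_lintegral_enorm f

theorem enorm_le_ofReal_mul_setLAverage_enorm {a C : ℝ} {f : α → ℝ} {s : Set α}
    (h : |a| ≤ C * ⨍ x in s, |f x| ∂μ) : ‖a‖ₑ ≤ ENNReal.ofReal C * ⨍⁻ x in s, ‖f x‖ₑ ∂μ := by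
  have h₀ : 0 ≤ ⨍ x in s, |f x| ∂μ := by
    rw [average_eq]
    exact smul_nonneg (by positivity) (integral_nonneg fun x => abs_nonneg _)
  calc ‖a‖ₑ = ENNReal.ofReal |a| := Real.enorm_eq_ofReal_abs a
    _ ≤ ENNReal.ofReal (C * ⨍ x in s, |f x| ∂μ) := ENNReal.ofReal_le_ofReal h
    _ = ENNReal.ofReal C * ‖⨍ x in s, |f x| ∂μ‖ₑ := by
      rw [ENNReal.ofReal_mul' h₀, Real.enorm_of_nonneg h₀]
    _ ≤ ENNReal.ofReal C * ⨍⁻ x in s, ‖f x‖ₑ ∂μ := by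
      gcongr
      simpa only [Real.enorm_abs] using enorm_average_le_laverage (μ := μ.restrict s) fun x => |f x|

theorem laverage_le_laverage_add {f g : α → ℝ≥0∞} {c : ℝ≥0∞} (h : ∀ x, f x ≤ g x + c) :
    ⨍⁻ x, f x ∂μ ≤ ⨍⁻ x, g x ∂μ + c := by
  calc ⨍⁻ x, f x ∂μ ≤ ⨍⁻ x, (g x + c) ∂μ := laverage_mono_ae (Eventually.of_forall h)
    _ = ⨍⁻ x, g x ∂μ + c * ((μ univ)⁻¹ * μ univ) := by
      rw [laverage_eq', laverage_eq', lintegral_add_right _ measurable_const, lintegral_const]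
      simp
    _ ≤ ⨍⁻ x, g x ∂μ + c := by grw [ENNReal.inv_mul_le_one, mul_one]

theorem lt_laverage_indicator_of_add_lt {g : α → ℝ≥0∞} {l : ℝ≥0∞} (hl : l ≠ ∞)
    (h : l + l < ⨍⁻ x, g x ∂μ) : l < ⨍⁻ x, {x | l < g x}.indicator g x ∂μ := by
  have htrunc : ∀ x, g x ≤ {x | l < g x}.indicator g x + l := fun x => by
    by_cases hx : l < g x
    · simp [hx]
    · rw [indicator_of_notMem (show x ∉ {x | l < g x} from hx), zero_add]
      exact not_lt.1 hx
  exact (ENNReal.add_lt_add_iff_right hl).1 (h.trans_le (laverage_le_laverage_add htrunc))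

theorem setLAverage_ne_top_of_lintegral_rpow_ne_top {g : α → ℝ≥0∞} {s : Set α} {p : ℝ}
    (hp : 1 ≤ p) (hs : μ s ≠ ∞) (hg : ∫⁻ x, g x ^ p ∂μ ≠ ∞) : ⨍⁻ x in s, g x ∂μ ≠ ∞ := by
  have hle : ∀ x, g x ≤ g x ^ p + 1 := fun x => by
    rcases le_total (g x) 1 with h | h
    · exact h.trans le_add_self
    · simpa using (ENNReal.rpow_le_rpow_of_exponent_le h hp).trans le_self_add
  refine (setLAverage_lt_top (ne_top_of_le_ne_top ?_ (lintegral_mono hle))).ne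
  rw [lintegral_add_right _ measurable_const, setLIntegral_const, one_mul]
  exact ENNReal.add_ne_top.2 ⟨ne_top_of_le_ne_top hg (setLIntegral_le_lintegral _ _), hs⟩

-- The layer-cake formula for `g.toReal` with respect to the measure `μ.withDensity g`.
theorem lintegral_setLIntegral_lt_mul_rpow {g : α → ℝ≥0∞} (hg : Measurable g)
    (hg_fin : ∀ x, g x ≠ ∞) {r : ℝ} (hr : 0 < r) :
    ∫⁻ s in Ioi 0, (∫⁻ x in {x | ENNReal.ofReal s < g x}, g x ∂μ) * ENNReal.ofReal (s ^ (r - 1)) =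
      (∫⁻ x, g x ^ (r + 1) ∂μ) / ENNReal.ofReal r := by
  have hcake := lintegral_rpow_eq_lintegral_meas_lt_mul (μ.withDensity g)
    (f := fun x => (g x).toReal) (Eventually.of_forall fun x => ENNReal.toReal_nonneg)
    hg.ennreal_toReal.aemeasurable hr
  have hdens : ∫⁻ x, ENNReal.ofReal ((g x).toReal ^ r) ∂μ.withDensity g =
      ∫⁻ x, g x * ENNReal.ofReal ((g x).toReal ^ r) ∂μ :=
    lintegral_withDensity_eq_lintegral_mul _ hg (by fun_prop)
  rw [hdens] at hcake
  rw [ENNReal.eq_div_iff (ENNReal.ofReal_pos.2 hr).ne' ENNReal.ofReal_ne_top]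
  convert hcake.symm using 1
  · congr 1
    refine setLIntegral_congr_fun measurableSet_Ioi fun s hs => ?_
    rw [withDensity_apply _ (measurableSet_lt measurable_const hg.ennreal_toReal)]
    congr 3
    ext x
    exact ENNReal.ofReal_lt_iff_lt_toReal (le_of_lt hs) (hg_fin x)
  · refine lintegral_congr fun x => ?_
    rw [← ENNReal.ofReal_rpow_of_nonneg ENNReal.toReal_nonneg hr.le,
      ENNReal.ofReal_toReal (hg_fin x), ENNReal.rpow_add_of_nonneg _ _ hr.le zero_le_one,
      ENNReal.rpow_one, mul_comm]

theorem setLIntegral_lt_le_rpow_mul {g : α → ℝ≥0∞} (hg : Measurable g) {p : ℝ} (hp : 1 ≤ p)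
    {l : ℝ≥0∞} (hl : l ≠ 0) :
    ∫⁻ x in {x | l < g x}, g x ∂μ ≤ l ^ (1 - p) * ∫⁻ x, g x ^ p ∂μ := by
  have hpt : ∀ a : ℝ≥0∞, l < a → a ≤ l ^ (1 - p) * a ^ p := by
    intro a hla
    rcases eq_or_ne a ∞ with rfl | ha
    · rw [ENNReal.top_rpow_of_pos (by linarith), ENNReal.mul_top]
      exact (ENNReal.rpow_pos (pos_iff_ne_zero.2 hl) hla.ne_top).ne'
    calc a = l ^ (1 - p) * l ^ (p - 1) * a := by
          rw [← ENNReal.rpow_add _ _ hl hla.ne_top, sub_add_sub_cancel, sub_self,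
            ENNReal.rpow_zero, one_mul]
      _ ≤ l ^ (1 - p) * a ^ (p - 1) * a := by gcongr
      _ = l ^ (1 - p) * a ^ p := by
          rw [mul_assoc]
          nth_rewrite 2 [← ENNReal.rpow_one a]
          rw [← ENNReal.rpow_add _ _ (pos_of_gt hla).ne' ha, sub_add_cancel]
  calc ∫⁻ x in {x | l < g x}, g x ∂μ ≤ ∫⁻ x in {x | l < g x}, l ^ (1 - p) * g x ^ p ∂μ :=
        setLIntegral_mono (by fun_prop) fun x hx => hpt (g x) hx
    _ ≤ ∫⁻ x, l ^ (1 - p) * g x ^ p ∂μ := setLIntegral_le_lintegral _ _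
    _ = l ^ (1 - p) * ∫⁻ x, g x ^ p ∂μ := lintegral_const_mul _ (by fun_prop)

theorem lintegral_rpow_le_lintegral_meas_add_lt_mul {A : α → ℝ≥0∞} (hA : AEMeasurable A μ)
    (hA_fin : ∀ᵐ x ∂μ, A x ≠ ∞) {q : ℝ} (hq : 0 < q) :
    ∫⁻ x, A x ^ q ∂μ ≤ ENNReal.ofReal (2 ^ q * q) *
      ∫⁻ s in Ioi 0, μ {x | ENNReal.ofReal s + ENNReal.ofReal s < A x} *
        ENNReal.ofReal (s ^ (q - 1)) := by
  have hcake := lintegral_rpow_eq_lintegral_meas_lt_mul μ (f := fun x => (A x).toReal / 2)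
    (Eventually.of_forall fun x => by positivity) (hA.ennreal_toReal.div_const 2) hq
  have hhalf : ∀ᵐ x ∂μ,
      A x ^ q = ENNReal.ofReal (2 ^ q) * ENNReal.ofReal (((A x).toReal / 2) ^ q) := by
    filter_upwards [hA_fin] with x hx
    rw [← ENNReal.ofReal_mul (by positivity), ← Real.mul_rpow (by norm_num) (by positivity),
      mul_div_cancel₀ _ two_ne_zero, ← ENNReal.ofReal_rpow_of_nonneg ENNReal.toReal_nonneg hq.le,
      ENNReal.ofReal_toReal hx]
  have hlevel : ∀ s : ℝ, 0 < s → ∀ x, s < (A x).toReal / 2 →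
      ENNReal.ofReal s + ENNReal.ofReal s < A x := by
    intro s hs x hx
    rcases eq_or_ne (A x) ∞ with h | h
    · simp [h]
    rw [← ENNReal.ofReal_add hs.le hs.le, ENNReal.ofReal_lt_iff_lt_toReal (by linarith) h]
    linarith
  rw [lintegral_congr_ae hhalf, lintegral_const_mul' _ _ ENNReal.ofReal_ne_top, hcake,
    ENNReal.ofReal_mul (by positivity), mul_assoc]
  gcongr _ * (_ * ?_)
  refine setLIntegral_mono' measurableSet_Ioi fun s hs => ?_
  gcongr
  exact hlevel s hs _

end

theorem volume_setOf_pos_ofReal_lt_le (T : ℝ≥0∞) :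
    volume {t : ℝ | 0 < t ∧ ENNReal.ofReal t < T} ≤ T := by
  rcases eq_or_ne T ∞ with rfl | hT
  · exact le_top
  calc volume {t : ℝ | 0 < t ∧ ENNReal.ofReal t < T} ≤ volume (Ioo 0 T.toReal) :=
        measure_mono fun t ht => ⟨ht.1, (ENNReal.ofReal_lt_iff_lt_toReal ht.1.le hT).1 ht.2⟩
    _ = T := by rw [Real.volume_Ioo, sub_zero, ENNReal.ofReal_toReal hT]

section

variable {E : Type*} [NormedAddCommGroup E] [MeasurableSpace E] [BorelSpace E] {μ : Measure E}
  [μ.IsAddHaarMeasure] {g : E → ℝ≥0∞}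

theorem setLAverage_ball_le (x : E) (t : ℝ) :
    ⨍⁻ y in ball x t, g y ∂μ ≤ (∫⁻ y, g y ∂μ) / μ (ball 0 t) := by
  rw [setLAverage_eq, Measure.addHaar_ball_center]
  exact ENNReal.div_le_div_right (setLIntegral_le_lintegral _ _) _

variable [NormedSpace ℝ E] [FiniteDimensional ℝ E]

theorem measurable_setLIntegral_ball (hg : Measurable g) :
    Measurable fun z : E × ℝ => ∫⁻ y in ball z.1 z.2, g y ∂μ := by
  have hS : MeasurableSet {w : (E × ℝ) × E | dist w.2 w.1.1 < w.1.2} :=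
    measurableSet_lt (by fun_prop) (by fun_prop)
  simp_rw [← lintegral_indicator measurableSet_ball]
  exact ((hg.comp measurable_snd).indicator hS).lintegral_prod_right'

theorem measurable_setLAverage_ball (hg : Measurable g) :
    Measurable fun z : E × ℝ => ⨍⁻ y in ball z.1 z.2, g y ∂μ := by
  simp_rw [setLAverage_eq, Measure.addHaar_ball_center]
  exact (measurable_setLIntegral_ball hg).div
    ((Monotone.measurable fun _ _ h => measure_mono (ball_subset_ball h)).comp measurable_snd)

theorem lintegral_setLIntegral_ball (hg : Measurable g) (t : ℝ) :
    ∫⁻ x, ∫⁻ y in ball x t, g y ∂μ ∂μ = μ (ball 0 t) * ∫⁻ y, g y ∂μ := by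
  have hS : MeasurableSet {w : E × E | dist w.2 w.1 < t} :=
    measurableSet_lt (by fun_prop) measurable_const
  have hsymm : ∀ x y, (ball x t).indicator g y = (ball y t).indicator (fun _ => g y) x := by
    intro x y
    simp only [indicator, mem_ball, dist_comm]
  simp_rw [← lintegral_indicator measurableSet_ball]
  rw [lintegral_lintegral_swap (f := fun x y => (ball x t).indicator g y)
    ((hg.comp measurable_snd).indicator hS).aemeasurable]
  simp_rw [hsymm, lintegral_indicator measurableSet_ball, setLIntegral_const,
    Measure.addHaar_ball_center, ← lintegral_const_mul' _ _ measure_ball_lt_top.ne, mul_comm]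

theorem lintegral_setLAverage_ball (hg : Measurable g) {t : ℝ} (ht : 0 < t) :
    ∫⁻ x, ⨍⁻ y in ball x t, g y ∂μ ∂μ = ∫⁻ y, g y ∂μ := by
  simp_rw [setLAverage_eq, Measure.addHaar_ball_center, ENNReal.div_eq_inv_mul]
  rw [lintegral_const_mul' _ _ (ENNReal.inv_ne_top.2 (measure_ball_pos μ 0 ht).ne'),
    lintegral_setLIntegral_ball hg, ← mul_assoc,
    ENNReal.inv_mul_cancel (measure_ball_pos μ 0 ht).ne' measure_ball_lt_top.ne, one_mul]

theorem prod_setOf_lt_setLAverage_ball_le (hg : Measurable g) {l T : ℝ≥0∞} (hl₀ : l ≠ 0)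
    (hl : l ≠ ∞) (hT : ∀ t : ℝ, 0 < t → T ≤ ENNReal.ofReal t → ∫⁻ y, g y ∂μ ≤ μ (ball 0 t) * l) :
    (μ.prod volume) {z : E × ℝ | l < ⨍⁻ y in ball z.1 z.2, g y ∂μ} ≤
      T * ((∫⁻ y, g y ∂μ) / l) := by
  set J := {t : ℝ | 0 < t ∧ ENNReal.ofReal t < T}
  have hslice : ∀ t, μ {x | l < ⨍⁻ y in ball x t, g y ∂μ} ≤
      J.indicator (fun _ => (∫⁻ y, g y ∂μ) / l) t := by
    intro t
    by_cases htJ : t ∈ J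
    · rw [indicator_of_mem htJ, ← lintegral_setLAverage_ball (μ := μ) hg htJ.1]
      have hm : Measurable fun x => ⨍⁻ y in ball x t, g y ∂μ :=
        (measurable_setLAverage_ball hg).comp (f := fun x : E => (x, t)) measurable_prodMk_right
      refine (measure_mono ?_).trans (meas_ge_le_lintegral_div hm.aemeasurable hl₀ hl)
      exact ofPred_subset_ofPred.2 fun x hx => hx.le
    · rw [indicator_of_notMem htJ]
      refine le_of_eq (measure_eq_zero_iff_ae_notMem.2 (Eventually.of_forall fun x hx => ?_))
      rcases le_or_gt t 0 with ht | ht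
      · simp [ball_eq_empty.2 ht] at hx
      · have hTt : T ≤ ENNReal.ofReal t := not_lt.1 fun h => htJ ⟨ht, h⟩
        exact (setLAverage_ball_le x t).not_gt
          (hx.trans_le' (ENNReal.div_le_of_le_mul' (hT t ht hTt)))
  calc (μ.prod volume) {z : E × ℝ | l < ⨍⁻ y in ball z.1 z.2, g y ∂μ}
      = ∫⁻ t, μ {x | l < ⨍⁻ y in ball x t, g y ∂μ} :=
        Measure.prod_apply_symm (measurableSet_lt measurable_const (measurable_setLAverage_ball hg))
    _ ≤ ∫⁻ t, J.indicator (fun _ => (∫⁻ y, g y ∂μ) / l) t := lintegral_mono hslice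
    _ ≤ (∫⁻ y, g y ∂μ) / l * volume J := lintegral_indicator_const_le _ _
    _ ≤ T * ((∫⁻ y, g y ∂μ) / l) := by rw [mul_comm]; gcongr; exact volume_setOf_pos_ofReal_lt_le T

theorem setLIntegral_lt_le_measure_ball_mul [Nontrivial E] (hg : Measurable g) {p s t : ℝ}
    (hp : 1 ≤ p) (hs : 0 < s) (ht : 0 < t)
    (hst : ((μ (ball 0 1))⁻¹ * (∫⁻ y, g y ^ p ∂μ) * ENNReal.ofReal (s ^ (-p))) ^
      (Module.finrank ℝ E : ℝ)⁻¹ ≤ ENNReal.ofReal t) :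
    ∫⁻ y in {y | ENNReal.ofReal s < g y}, g y ∂μ ≤ μ (ball 0 t) * ENNReal.ofReal s := by
  set d : ℝ := (Module.finrank ℝ E : ℝ)
  have hd : 0 < d := Nat.cast_pos.2 Module.finrank_pos
  set V := μ (ball (0 : E) 1)
  set I := ∫⁻ y, g y ^ p ∂μ
  calc ∫⁻ y in {y | ENNReal.ofReal s < g y}, g y ∂μ ≤ ENNReal.ofReal s ^ (1 - p) * I :=
        setLIntegral_lt_le_rpow_mul hg hp (ENNReal.ofReal_pos.2 hs).ne'
    _ = ((V⁻¹ * I * ENNReal.ofReal (s ^ (-p))) ^ d⁻¹) ^ d * V * ENNReal.ofReal s := by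
        rw [ENNReal.rpow_inv_rpow hd.ne', ENNReal.ofReal_rpow_of_pos hs, sub_eq_neg_add,
          Real.rpow_add_one hs.ne', ENNReal.ofReal_mul (by positivity),
          show V⁻¹ * I * ENNReal.ofReal (s ^ (-p)) * V * ENNReal.ofReal s =
            (V⁻¹ * V) * (I * ENNReal.ofReal (s ^ (-p)) * ENNReal.ofReal s) by ring,
          ENNReal.inv_mul_cancel (measure_ball_pos μ 0 one_pos).ne' measure_ball_lt_top.ne]
        ring
    _ ≤ ENNReal.ofReal t ^ d * V * ENNReal.ofReal s := by gcongr
    _ = μ (ball 0 t) * ENNReal.ofReal s := by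
        rw [Measure.addHaar_ball_of_pos μ 0 ht, ENNReal.ofReal_rpow_of_pos ht, Real.rpow_natCast]

theorem prod_setOf_add_lt_setLAverage_ball_le [Nontrivial E] (hg : Measurable g) {p : ℝ}
    (hp : 1 ≤ p) {s : ℝ} (hs : 0 < s) :
    (μ.prod volume) {z : E × ℝ |
        ENNReal.ofReal s + ENNReal.ofReal s < ⨍⁻ y in ball z.1 z.2, g y ∂μ} ≤
      ((μ (ball 0 1))⁻¹ * ∫⁻ y, g y ^ p ∂μ) ^ (Module.finrank ℝ E : ℝ)⁻¹ *
        ENNReal.ofReal (s ^ (-(p / Module.finrank ℝ E) - 1)) *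
        ∫⁻ y in {y | ENNReal.ofReal s < g y}, g y ∂μ := by
  set d : ℝ := (Module.finrank ℝ E : ℝ)
  set a := (μ (ball (0 : E) 1))⁻¹ * ∫⁻ y, g y ^ p ∂μ
  set S := {y | ENNReal.ofReal s < g y}
  have hS : MeasurableSet S := measurableSet_lt measurable_const hg
  have hpow : s ^ (-(p / d) - 1) = (s ^ (-p)) ^ d⁻¹ * s⁻¹ := by
    rw [← Real.rpow_mul hs.le, Real.rpow_sub_one hs.ne', div_eq_mul_inv, neg_mul, div_eq_mul_inv]
  calc _ ≤ (μ.prod volume) {z : E × ℝ |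
          ENNReal.ofReal s < ⨍⁻ y in ball z.1 z.2, S.indicator g y ∂μ} :=
        measure_mono fun _ hz => lt_laverage_indicator_of_add_lt ENNReal.ofReal_ne_top hz
    _ ≤ (a * ENNReal.ofReal (s ^ (-p))) ^ d⁻¹ *
          ((∫⁻ y, S.indicator g y ∂μ) / ENNReal.ofReal s) := by
        refine prod_setOf_lt_setLAverage_ball_le (hg.indicator hS)
          (ENNReal.ofReal_pos.2 hs).ne' ENNReal.ofReal_ne_top fun t ht hst => ?_
        rw [lintegral_indicator hS]
        exact setLIntegral_lt_le_measure_ball_mul hg hp hs ht hst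
    _ = _ := by
      rw [ENNReal.mul_rpow_of_nonneg _ _ (by positivity),
        ENNReal.ofReal_rpow_of_nonneg (by positivity) (by positivity), hpow,
        ENNReal.ofReal_mul (by positivity), ENNReal.ofReal_inv_of_pos hs,
        lintegral_indicator hS, ENNReal.div_eq_inv_mul]
      ring

theorem prod_setOf_add_lt_setLAverage_ball_mul_rpow_le [Nontrivial E] (hg : Measurable g)
    {p q : ℝ} (hp : 1 ≤ p) (hq : q = p + p / Module.finrank ℝ E) {s : ℝ} (hs : 0 < s) :
    (μ.prod volume) {z : E × ℝ |
        ENNReal.ofReal s + ENNReal.ofReal s < ⨍⁻ y in ball z.1 z.2, g y ∂μ} *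
        ENNReal.ofReal (s ^ (q - 1)) ≤
      ((μ (ball 0 1))⁻¹ * ∫⁻ y, g y ^ p ∂μ) ^ (Module.finrank ℝ E : ℝ)⁻¹ *
        ((∫⁻ y in {y | ENNReal.ofReal s < g y}, g y ∂μ) * ENNReal.ofReal (s ^ (p - 1 - 1))) := by
  grw [prod_setOf_add_lt_setLAverage_ball_le hg hp hs, mul_right_comm _ _ (∫⁻ y in _, g y ∂μ),
    mul_assoc, mul_assoc, ← ENNReal.ofReal_mul (by positivity), ← Real.rpow_add hs, hq]
  rw [show -(p / Module.finrank ℝ E) - 1 + (p + p / Module.finrank ℝ E - 1) = p - 1 - 1 by ring]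

theorem lintegral_setLAverage_ball_rpow_le [Nontrivial E] (hg : Measurable g)
    (hg_fin : ∀ y, g y ≠ ∞) {p q : ℝ} (hp : 1 < p) (hq : q = p + p / Module.finrank ℝ E) :
    ∫⁻ z, (⨍⁻ y in ball z.1 z.2, g y ∂μ) ^ q ∂(μ.prod volume) ≤
      ENNReal.ofReal (2 ^ q * q / (p - 1)) * (μ (ball 0 1))⁻¹ ^ (Module.finrank ℝ E : ℝ)⁻¹ *
        (∫⁻ y, g y ^ p ∂μ) ^ (q / p) := by
  set d : ℝ := (Module.finrank ℝ E : ℝ)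
  have hd : 0 < d := Nat.cast_pos.2 Module.finrank_pos
  have hq₀ : 0 < q := by rw [hq]; positivity
  set V := μ (ball (0 : E) 1)
  have hV : V⁻¹ ≠ ∞ := ENNReal.inv_ne_top.2 (measure_ball_pos μ 0 one_pos).ne'
  set I := ∫⁻ y, g y ^ p ∂μ
  rcases eq_or_ne I ∞ with hI | hI
  · rw [hI, ENNReal.top_rpow_of_pos (by positivity), ENNReal.mul_top]
    · exact le_top
    · exact mul_ne_zero (ENNReal.ofReal_pos.2 (by have := sub_pos.2 hp; positivity)).ne'
        (ENNReal.rpow_pos (ENNReal.inv_pos.2 measure_ball_lt_top.ne) hV).ne'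
  set c := (V⁻¹ * I) ^ d⁻¹
  have hc : c ≠ ∞ := ENNReal.rpow_ne_top_of_nonneg (by positivity) (ENNReal.mul_ne_top hV hI)
  calc ∫⁻ z, (⨍⁻ y in ball z.1 z.2, g y ∂μ) ^ q ∂(μ.prod volume)
      ≤ ENNReal.ofReal (2 ^ q * q) * ∫⁻ s in Ioi 0, (μ.prod volume) {z : E × ℝ |
          ENNReal.ofReal s + ENNReal.ofReal s < ⨍⁻ y in ball z.1 z.2, g y ∂μ} *
            ENNReal.ofReal (s ^ (q - 1)) :=
        lintegral_rpow_le_lintegral_meas_add_lt_mul (measurable_setLAverage_ball hg).aemeasurable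
          (ae_of_all _ fun _ => setLAverage_ne_top_of_lintegral_rpow_ne_top hp.le
            measure_ball_lt_top.ne hI) hq₀
    _ ≤ ENNReal.ofReal (2 ^ q * q) * ∫⁻ s in Ioi 0, c *
          ((∫⁻ y in {y | ENNReal.ofReal s < g y}, g y ∂μ) * ENNReal.ofReal (s ^ (p - 1 - 1))) := by
        gcongr _ * ?_
        exact setLIntegral_mono' measurableSet_Ioi fun s hs =>
          prod_setOf_add_lt_setLAverage_ball_mul_rpow_le hg hp.le hq hs
    _ = ENNReal.ofReal (2 ^ q * q) * (c * (I / ENNReal.ofReal (p - 1))) := by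
        rw [lintegral_const_mul' _ _ hc,
          lintegral_setLIntegral_lt_mul_rpow hg hg_fin (sub_pos.2 hp), sub_add_cancel]
    _ = _ := by
        have hqp : q / p = d⁻¹ + 1 := by
          rw [hq]
          field_simp
          ring
        rw [show c = (V⁻¹ * I) ^ d⁻¹ from rfl, hqp,
          ENNReal.rpow_add_of_nonneg _ _ (by positivity) zero_le_one, ENNReal.rpow_one,
          ENNReal.ofReal_div_of_pos (sub_pos.2 hp), ENNReal.div_eq_inv_mul,
          ENNReal.div_eq_inv_mul, ENNReal.mul_rpow_of_nonneg _ _ (by positivity)]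
        ring

theorem eLpNorm_setLAverage_ball_le [Nontrivial E] (hg : Measurable g) (hg_fin : ∀ y, g y ≠ ∞)
    {p q : ℝ} (hp : 1 < p) (hq : q = p + p / Module.finrank ℝ E) :
    eLpNorm (fun z : E × ℝ => ⨍⁻ y in ball z.1 z.2, g y ∂μ) (ENNReal.ofReal q) (μ.prod volume) ≤
      (ENNReal.ofReal (2 ^ q * q / (p - 1)) * (μ (ball 0 1))⁻¹ ^ (Module.finrank ℝ E : ℝ)⁻¹) ^ q⁻¹ *
        eLpNorm g (ENNReal.ofReal p) μ := by
  have hq₀ : 0 < q := by rw [hq]; positivity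
  rw [eLpNorm_eq_lintegral_rpow_enorm_toReal (by simpa using hq₀) ENNReal.ofReal_ne_top,
    eLpNorm_eq_lintegral_rpow_enorm_toReal (by simpa using hp.trans_le' zero_le_one)
      ENNReal.ofReal_ne_top, ENNReal.toReal_ofReal hq₀.le,
    ENNReal.toReal_ofReal (by linarith)]
  simp only [enorm_eq_self]
  calc _ ≤ (ENNReal.ofReal (2 ^ q * q / (p - 1)) * (μ (ball 0 1))⁻¹ ^ (Module.finrank ℝ E : ℝ)⁻¹ *
          (∫⁻ y, g y ^ p ∂μ) ^ (q / p)) ^ (1 / q) := by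
        gcongr
        exact lintegral_setLAverage_ball_rpow_le hg hg_fin hp hq
    _ = _ := by
        rw [ENNReal.mul_rpow_of_nonneg _ _ (by positivity), ← ENNReal.rpow_mul, one_div,
          div_mul_eq_mul_div, mul_inv_cancel₀ hq₀.ne', ← one_div]

theorem eLpNorm_le_of_abs_le_mul_setAverage_ball [Nontrivial E] {f : E → ℝ} {F : E × ℝ → ℝ}
    (hf : AEMeasurable f μ) {p q C : ℝ} (hp : 1 < p) (hq : q = p + p / Module.finrank ℝ E)
    (hF : ∀ x t, 0 < t → |F (x, t)| ≤ C * ⨍ y in ball x t, |f y| ∂μ) :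
    eLpNorm F (ENNReal.ofReal q) ((μ.prod volume).restrict (univ ×ˢ Ioi 0)) ≤
      ENNReal.ofReal C * (ENNReal.ofReal (2 ^ q * q / (p - 1)) *
        (μ (ball 0 1))⁻¹ ^ (Module.finrank ℝ E : ℝ)⁻¹) ^ q⁻¹ * eLpNorm f (ENNReal.ofReal p) μ := by
  obtain ⟨f₀, hf₀, hff₀⟩ := hf
  have hA : ∀ z ∈ univ ×ˢ Ioi (0 : ℝ),
      ‖F z‖ₑ ≤ C.toNNReal * ‖(⨍⁻ y in ball z.1 z.2, ‖f₀ y‖ₑ ∂μ)‖ₑ := by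
    rintro ⟨x, t⟩ ⟨-, ht⟩
    have hcongr : ⨍⁻ y in ball x t, ‖f y‖ₑ ∂μ = ⨍⁻ y in ball x t, ‖f₀ y‖ₑ ∂μ :=
      laverage_congr (ae_restrict_of_ae (hff₀.mono fun y hy => by simp only [hy]))
    rw [enorm_eq_self, ← hcongr]
    exact enorm_le_ofReal_mul_setLAverage_enorm (hF x t ht)
  calc _ ≤ C.toNNReal • eLpNorm (fun z => ⨍⁻ y in ball z.1 z.2, ‖f₀ y‖ₑ ∂μ)
          (ENNReal.ofReal q) ((μ.prod volume).restrict (univ ×ˢ Ioi 0)) :=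
        eLpNorm_le_nnreal_smul_eLpNorm_of_ae_le_mul'
          ((ae_restrict_iff' (MeasurableSet.univ.prod measurableSet_Ioi)).2 (ae_of_all _ hA)) _
    _ ≤ _ := by
        rw [ENNReal.smul_def, smul_eq_mul, mul_assoc, ← eLpNorm_congr_ae hff₀.symm,
          ← eLpNorm_enorm f₀]
        exact mul_le_mul' le_rfl ((eLpNorm_mono_measure _ Measure.restrict_le_self).trans
          (eLpNorm_setLAverage_ball_le hf₀.enorm (fun _ => enorm_ne_top) hp hq))

end

theorem lq_bound_of_avg_bound_general (n : ℕ) (hn : 1 ≤ n) (p : ℝ) (hp : 1 < p) (C : ℝ) :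
    ∃ C' : ℝ, 0 < C' ∧
      ∀ (f : EuclideanSpace ℝ (Fin n) → ℝ) (F : EuclideanSpace ℝ (Fin n) × ℝ → ℝ),
        MemLp f (ENNReal.ofReal p) volume →
        LocallyIntegrableOn F (univ ×ˢ Ioi (0 : ℝ)) volume →
        (∀ (x : EuclideanSpace ℝ (Fin n)) (t : ℝ), 0 < t →
            |F (x, t)| ≤ C * ⨍ y in ball x t, |f y|) →
        eLpNorm F (ENNReal.ofReal ((n + 1) * p / n))
            (volume.restrict (univ ×ˢ Ioi (0 : ℝ))) ≤
          ENNReal.ofReal C' * eLpNorm f (ENNReal.ofReal p) volume := by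
  have : Nontrivial (EuclideanSpace ℝ (Fin n)) :=
    Module.nontrivial_of_finrank_pos (R := ℝ) (by rw [finrank_euclideanSpace_fin]; omega)
  have hq : (n + 1) * p / n = p + p / Module.finrank ℝ (EuclideanSpace ℝ (Fin n)) := by
    rw [finrank_euclideanSpace_fin]
    field_simp
  set q : ℝ := (n + 1) * p / n
  set K := ENNReal.ofReal C * (ENNReal.ofReal (2 ^ q * q / (p - 1)) *
    (volume (ball (0 : EuclideanSpace ℝ (Fin n)) 1))⁻¹ ^
      (Module.finrank ℝ (EuclideanSpace ℝ (Fin n)) : ℝ)⁻¹) ^ q⁻¹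
  have hK : K ≠ ∞ := by
    have := (measure_ball_pos volume (0 : EuclideanSpace ℝ (Fin n)) one_pos).ne'
    have : 0 ≤ q⁻¹ := by positivity
    finiteness
  refine ⟨K.toReal + 1, by positivity, fun f F hf _ hF => ?_⟩
  calc _ ≤ K * eLpNorm f (ENNReal.ofReal p) volume := by
        rw [Measure.volume_eq_prod]
        exact eLpNorm_le_of_abs_le_mul_setAverage_ball hf.1.aemeasurable hp hq hF
    _ ≤ _ := by
        gcongr
        exact (ENNReal.ofReal_toReal hK).symm.le.trans (ENNReal.ofReal_le_ofReal (by linarith))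

/-- Let F : ℝⁿ × (0,∞) → ℝ be locally integrable and f ∈ Lᵖ(ℝⁿ), p > 1, n ≥ 1.  If
|F(x,t)| ≤ C ⨍_{B(x,t)} |f| for all (x,t) with t > 0, then
‖F‖_{L^q(ℝ^{n+1}_+)} ≤ C' ‖f‖_{L^p(ℝⁿ)} with q = (n+1)p/n, C' = C'(n,p,C). -/
theorem lq_bound_of_avg_bound (n : ℕ) (hn : 1 ≤ n) (p : ℝ) (hp : 1 < p)
    (C : ℝ) (hC : 0 ≤ C) :
    ∃ C' : ℝ, 0 < C' ∧
      ∀ (f : EuclideanSpace ℝ (Fin n) → ℝ) (F : EuclideanSpace ℝ (Fin n) × ℝ → ℝ),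
        MemLp f (ENNReal.ofReal p) volume →
        LocallyIntegrableOn F (univ ×ˢ Ioi (0 : ℝ)) volume →
        (∀ (x : EuclideanSpace ℝ (Fin n)) (t : ℝ), 0 < t →
            |F (x, t)| ≤ C * ⨍ y in ball x t, |f y|) →
        eLpNorm F (ENNReal.ofReal ((n + 1) * p / n))
            (volume.restrict (univ ×ˢ Ioi (0 : ℝ))) ≤
          ENNReal.ofReal C' * eLpNorm f (ENNReal.ofReal p) volume :=
  lq_bound_of_avg_bound_general n hn p hp C
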